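/- arXiv:1612.00547 — 8 statements merged into one kernel-verified Lean document; each statement's English description precedes it below -/
import Mathlib

section
/- For the function f(x) = (1/2)xᵀAx + bᵀx + (ρ/3)‖x‖³ on ℝᵈ with A symmetric and ρ > 0, if s is a point satisfying (A + ρ‖s‖I)s + b = 0 and A + ρ‖s‖I ⪰ 0, then for every x ∈ ℝᵈ, f(x) = f(s) + (1/2)(x−s)ᵀ(A + ρ‖s‖I)(x−s) + (ρ/6)(‖s‖−‖x‖)²(‖s‖+2‖x‖). In particular, s is a global minimizer of f. -/
open scoped RealInnerProductSpace

noncomputable def Am {n : ℕ} (A : Matrix (Fin n) (Fin n) ℝ) :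
    EuclideanSpace ℝ (Fin n) →L[ℝ] EuclideanSpace ℝ (Fin n) :=
  Matrix.toEuclideanCLM (𝕜 := ℝ) A

/-- f(x) = (1/2)xᵀAx + bᵀx + (ρ/3)‖x‖³ -/
noncomputable def cubicF {n : ℕ} (A : Matrix (Fin n) (Fin n) ℝ)
    (b : EuclideanSpace ℝ (Fin n)) (ρ : ℝ) (x : EuclideanSpace ℝ (Fin n)) : ℝ :=
  (1/2) * ⟪x, Am A x⟫ + ⟪b, x⟫ + (ρ/3) * ‖x‖^3

/-- ∇f(x) = Ax + b + ρ‖x‖x -/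
noncomputable def gradF {n : ℕ} (A : Matrix (Fin n) (Fin n) ℝ)
    (b : EuclideanSpace ℝ (Fin n)) (ρ : ℝ) (x : EuclideanSpace ℝ (Fin n)) :
    EuclideanSpace ℝ (Fin n) := Am A x + b + (ρ * ‖x‖) • x

/-!
Writing `H = A + ρ‖s‖ I`, the stationarity condition says `b = -H s`, so after completing the
square in `H` the difference `f x - f s - ½ ⟪x - s, H (x - s)⟫` only involves `r = ‖s‖` and
`t = ‖x‖`: it is `ρ (t³/3 - r³/3 - r (t² - r²)/2) = (ρ/6) (r - t)² (r + 2t)`. Both terms of the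
expansion are nonnegative when `H ⪰ 0` and `ρ > 0`, so `s` is a global minimizer.
-/

theorem Matrix.IsSymm.isSymmetric_Am {n : ℕ} {A : Matrix (Fin n) (Fin n) ℝ} (hA : A.IsSymm) :
    (Am A : EuclideanSpace ℝ (Fin n) →ₗ[ℝ] EuclideanSpace ℝ (Fin n)).IsSymmetric :=
  Matrix.isSymmetric_toEuclideanLin_iff.mpr (Matrix.isHermitian_iff_isSymm.mpr hA)

section InnerProductSpace

variable {E : Type*} [NormedAddCommGroup E] [InnerProductSpace ℝ E] {T : E →ₗ[ℝ] E}

theorem LinearMap.IsSymmetric.inner_sub_map_sub (hT : T.IsSymmetric) (x s : E) :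
    ⟪x - s, T (x - s)⟫ = ⟪x, T x⟫ - 2 * ⟪T s, x⟫ + ⟪s, T s⟫ := by
  have hsx : ⟪s, T x⟫ = ⟪T s, x⟫ := (hT s x).symm
  have hxs : ⟪x, T s⟫ = ⟪T s, x⟫ := real_inner_comm _ _
  rw [map_sub, inner_sub_left, inner_sub_right, inner_sub_right, hsx, hxs]
  ring

theorem LinearMap.IsSymmetric.cubic_eq_add_of_stationary (hT : T.IsSymmetric) {b s : E} {ρ : ℝ}
    (hs : T s + (ρ * ‖s‖) • s + b = 0) (x : E) :
    (1/2) * ⟪x, T x⟫ + ⟪b, x⟫ + (ρ/3) * ‖x‖^3 =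
      (1/2) * ⟪s, T s⟫ + ⟪b, s⟫ + (ρ/3) * ‖s‖^3
        + (1/2) * ⟪x - s, T (x - s) + (ρ * ‖s‖) • (x - s)⟫
        + (ρ/6) * (‖s‖ - ‖x‖)^2 * (‖s‖ + 2 * ‖x‖) := by
  have hb : b = -(T s + (ρ * ‖s‖) • s) := eq_neg_of_add_eq_zero_right hs
  have hquad : ⟪x - s, T (x - s) + (ρ * ‖s‖) • (x - s)⟫ =
      ⟪x, T x⟫ - 2 * ⟪T s, x⟫ + ⟪s, T s⟫ + ρ * ‖s‖ * (‖x‖^2 - 2 * ⟪x, s⟫ + ‖s‖^2) := by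
    rw [inner_add_right, hT.inner_sub_map_sub, real_inner_smul_right,
      real_inner_self_eq_norm_sq, norm_sub_sq_real]
  rw [hquad, hb]
  simp only [inner_neg_left, inner_add_left, real_inner_smul_left, real_inner_self_eq_norm_sq,
    hT s s, real_inner_comm s x]
  ring

end InnerProductSpace

theorem stmt0 {n : ℕ} (A : Matrix (Fin n) (Fin n) ℝ) (hA : A.IsSymm)
    (b : EuclideanSpace ℝ (Fin n)) (ρ : ℝ) (hρ : 0 < ρ)
    (s : EuclideanSpace ℝ (Fin n))
    (hs1 : Am A s + (ρ * ‖s‖) • s + b = 0)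
    (hs2 : ∀ x : EuclideanSpace ℝ (Fin n), 0 ≤ ⟪x, Am A x + (ρ * ‖s‖) • x⟫) :
    (∀ x : EuclideanSpace ℝ (Fin n),
      cubicF A b ρ x = cubicF A b ρ s
        + (1/2) * ⟪x - s, Am A (x - s) + (ρ * ‖s‖) • (x - s)⟫
        + (ρ/6) * (‖s‖ - ‖x‖)^2 * (‖s‖ + 2 * ‖x‖)) ∧
    (∀ x : EuclideanSpace ℝ (Fin n), cubicF A b ρ s ≤ cubicF A b ρ x) := by
  have expansion : ∀ x, cubicF A b ρ x = cubicF A b ρ s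
      + (1/2) * ⟪x - s, Am A (x - s) + (ρ * ‖s‖) • (x - s)⟫
      + (ρ/6) * (‖s‖ - ‖x‖)^2 * (‖s‖ + 2 * ‖x‖) :=
    hA.isSymmetric_Am.cubic_eq_add_of_stationary hs1
  refine ⟨expansion, fun x => ?_⟩
  have hcubic : 0 ≤ (ρ/6) * (‖s‖ - ‖x‖)^2 * (‖s‖ + 2 * ‖x‖) := by positivity
  rw [expansion x]
  linarith [hs2 (x - s)]
end

section
/- Let s be a global minimizer of f(x) = (1/2)xᵀAx + bᵀx + (ρ/3)‖x‖³, so that (A + ρ‖s‖I)s + b = 0 and A + ρ‖s‖I ⪰ 0. Then f(s) = −(1/2)sᵀ(A + ρ‖s‖I)s − (ρ/6)‖s‖³ ≤ −(ρ/6)‖s‖³. -/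
open scoped RealInnerProductSpace

theorem stmt1 {n : ℕ} (A : Matrix (Fin n) (Fin n) ℝ) (hA : A.IsSymm)
    (b : EuclideanSpace ℝ (Fin n)) (ρ : ℝ) (hρ : 0 < ρ)
    (s : EuclideanSpace ℝ (Fin n))
    (hmin : ∀ x : EuclideanSpace ℝ (Fin n), cubicF A b ρ s ≤ cubicF A b ρ x)
    (hs1 : Am A s + (ρ * ‖s‖) • s + b = 0)
    (hs2 : ∀ x : EuclideanSpace ℝ (Fin n), 0 ≤ ⟪x, Am A x + (ρ * ‖s‖) • x⟫) :
    cubicF A b ρ s = -(1/2) * ⟪s, Am A s + (ρ * ‖s‖) • s⟫ - (ρ/6) * ‖s‖^3 ∧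
    cubicF A b ρ s ≤ -(ρ/6) * ‖s‖^3 := by
  have hb : b = -(Am A s + (ρ * ‖s‖) • s) := eq_neg_of_add_eq_zero_right hs1
  have hbs : ⟪b, s⟫ = -⟪s, Am A s⟫ - ρ * ‖s‖ * ‖s‖^2 := by
    rw [hb]
    rw [inner_neg_left, inner_add_left, real_inner_smul_left, real_inner_comm,
      real_inner_self_eq_norm_sq]
    ring
  have hexp : ⟪s, Am A s + (ρ * ‖s‖) • s⟫ = ⟪s, Am A s⟫ + ρ * ‖s‖ * ‖s‖^2 := by
    rw [inner_add_right, real_inner_smul_right, real_inner_self_eq_norm_sq]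
  have h3 : ‖s‖^3 = ‖s‖ * ‖s‖^2 := by ring
  have heq : cubicF A b ρ s = -(1/2) * ⟪s, Am A s + (ρ * ‖s‖) • s⟫ - (ρ/6) * ‖s‖^3 := by
    rw [cubicF, hbs, hexp, h3]; ring
  refine ⟨heq, ?_⟩
  have := hs2 s
  rw [heq]
  nlinarith [this]
end

section
/- Let s be a global minimizer of f(x) = (1/2)xᵀAx + bᵀx + (ρ/3)‖x‖³, let γ = −λ_min(A) and β = ‖A‖_op. Then ‖s‖ ≤ γ/(2ρ) + sqrt((γ/(2ρ))² + ‖b‖/ρ) ≤ β/(2ρ) + sqrt((β/(2ρ))² + ‖b‖/ρ). -/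
open scoped RealInnerProductSpace

lemma mono_aux (c g bb : ℝ) (hc : 0 ≤ c) (hgb : g ≤ bb) :
    g + Real.sqrt (g^2 + c) ≤ bb + Real.sqrt (bb^2 + c) := by
  have hsb : -bb ≤ Real.sqrt (bb^2 + c) := by
    have h1 : Real.sqrt (bb^2) ≤ Real.sqrt (bb^2 + c) :=
      Real.sqrt_le_sqrt (by nlinarith)
    have h2 : Real.sqrt (bb^2) = |bb| := Real.sqrt_sq_eq_abs bb
    nlinarith [neg_abs_le bb]
  have hRHS : 0 ≤ Real.sqrt (bb^2 + c) + (bb - g) := by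
    nlinarith [Real.sqrt_nonneg (bb^2+c)]
  have key : Real.sqrt (g^2 + c) ≤ Real.sqrt (bb^2 + c) + (bb - g) := by
    rw [show Real.sqrt (bb^2 + c) + (bb - g)
        = Real.sqrt ((Real.sqrt (bb^2 + c) + (bb - g))^2) from (Real.sqrt_sq hRHS).symm]
    apply Real.sqrt_le_sqrt
    have h2 : Real.sqrt (bb^2 + c) ^ 2 = bb^2 + c := Real.sq_sqrt (by nlinarith)
    nlinarith [Real.sqrt_nonneg (bb^2+c)]
  linarith

set_option maxHeartbeats 1000000 in
theorem stmt3 {n : ℕ} (A : Matrix (Fin n) (Fin n) ℝ) (hA : A.IsSymm)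
    (b : EuclideanSpace ℝ (Fin n)) (ρ : ℝ) (hρ : 0 < ρ)
    (γ β : ℝ) (hβ : β = ‖Am A‖)
    -- γ = −λ_min(A): −γ is an eigenvalue and a lower bound of the quadratic form
    (hev : ∃ v : EuclideanSpace ℝ (Fin n), v ≠ 0 ∧ Am A v = (-γ) • v)
    (hlb : ∀ x : EuclideanSpace ℝ (Fin n), -γ * ‖x‖^2 ≤ ⟪x, Am A x⟫)
    (s : EuclideanSpace ℝ (Fin n))
    (hmin : ∀ x : EuclideanSpace ℝ (Fin n), cubicF A b ρ s ≤ cubicF A b ρ x)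
    (hs1 : Am A s + (ρ * ‖s‖) • s + b = 0)
    (hs2 : ∀ x : EuclideanSpace ℝ (Fin n), 0 ≤ ⟪x, Am A x + (ρ * ‖s‖) • x⟫) :
    ‖s‖ ≤ γ/(2*ρ) + Real.sqrt ((γ/(2*ρ))^2 + ‖b‖/ρ) ∧
    γ/(2*ρ) + Real.sqrt ((γ/(2*ρ))^2 + ‖b‖/ρ)
      ≤ β/(2*ρ) + Real.sqrt ((β/(2*ρ))^2 + ‖b‖/ρ) := by
  have hbρ : 0 ≤ ‖b‖/ρ := by positivity
  constructor
  · set r := ‖s‖ with hr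
    have hr0 : 0 ≤ r := norm_nonneg s
    have hinner : ⟪s, Am A s⟫ + (ρ * r) * r^2 + ⟪s, b⟫ = 0 := by
      have h : ⟪s, Am A s + (ρ * r) • s + b⟫ = 0 := by rw [hs1, inner_zero_right]
      rw [inner_add_right, inner_add_right, real_inner_smul_right,
        real_inner_self_eq_norm_sq] at h
      linarith
    have hb : -(r * ‖b‖) ≤ ⟪s, b⟫ := by
      have h1 := abs_real_inner_le_norm s b
      have h2 := neg_abs_le ⟪s, b⟫
      linarith
    have hqf := hlb s
    have hcube : ρ * r^3 ≤ γ * r^2 + ‖b‖ * r := by nlinarith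
    set t := Real.sqrt ((γ/(2*ρ))^2 + ‖b‖/ρ) with htdef
    have ht0 : 0 ≤ t := Real.sqrt_nonneg _
    have ht2 : t^2 = (γ/(2*ρ))^2 + ‖b‖/ρ := Real.sq_sqrt (by positivity)
    rcases eq_or_lt_of_le hr0 with h | h
    · have habs : |γ/(2*ρ)| ≤ t := by
        rw [← Real.sqrt_sq_eq_abs]
        exact Real.sqrt_le_sqrt (by linarith)
      nlinarith [neg_abs_le (γ/(2*ρ))]
    · have h2 : ρ * r^2 ≤ γ * r + ‖b‖ := by nlinarith
      by_contra hcon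
      push_neg at hcon
      have hgt : t < r - γ/(2*ρ) := by linarith
      have hsq : t^2 < (r - γ/(2*ρ))^2 := by nlinarith
      have hsq' : ρ * t^2 < ρ * (r - γ/(2*ρ))^2 := by nlinarith
      have hρt2 : ρ * t^2 = ρ * (γ/(2*ρ))^2 + ‖b‖ := by
        rw [ht2]; field_simp
      have hγ : γ = 2*ρ*(γ/(2*ρ)) := by field_simp
      nlinarith [hsq', h2, hρt2, hγ]
  · obtain ⟨v, hv, hAv⟩ := hev
    have hvn : 0 < ‖v‖ := norm_pos_iff.mpr hv
    have hγβ : γ ≤ β := by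
      have h1 : ⟪v, Am A v⟫ = -γ * ‖v‖^2 := by
        rw [hAv, real_inner_smul_right, real_inner_self_eq_norm_sq]
      have h2 : |⟪v, Am A v⟫| ≤ ‖Am A‖ * ‖v‖^2 := by
        calc |⟪v, Am A v⟫| ≤ ‖v‖ * ‖Am A v‖ := abs_real_inner_le_norm _ _
          _ ≤ ‖v‖ * (‖Am A‖ * ‖v‖) := by
              gcongr; exact (Am A).le_opNorm v
          _ = ‖Am A‖ * ‖v‖^2 := by ring
      have h3 := neg_abs_le ⟪v, Am A v⟫
      have h4 : γ * ‖v‖^2 ≤ β * ‖v‖^2 := by rw [hβ]; nlinarith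
      exact le_of_mul_le_mul_right h4 (by positivity)
    have hgg : γ/(2*ρ) ≤ β/(2*ρ) := by gcongr
    exact mono_aux (‖b‖/ρ) (γ/(2*ρ)) (β/(2*ρ)) hbρ hgg
end

section
/- Let s be a global minimizer of f(x) = (1/2)xᵀAx + bᵀx + (ρ/3)‖x‖³, let v₁ be a unit eigenvector of A corresponding to its smallest eigenvalue −γ, and suppose v₁ᵀb ≠ 0. Then ‖s‖ ≥ γ/(2ρ) + sqrt((γ/(2ρ))² + |v₁ᵀb|/ρ). -/
open scoped RealInnerProductSpace

theorem LinearMap.IsSymmetric.add_mul_inner_eigenvector_eq_neg_inner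
    {E : Type*} [NormedAddCommGroup E] [InnerProductSpace ℝ E]
    {T : E →ₗ[ℝ] E} (hT : T.IsSymmetric) {μ c : ℝ} {v s b : E}
    (hv : T v = μ • v) (hs : T s + c • s + b = 0) :
    (c + μ) * ⟪v, s⟫ = -⟪v, b⟫ := by
  have hpair := congrArg (fun y => ⟪v, y⟫) hs
  simp only [inner_add_right, inner_smul_right, inner_zero_right] at hpair
  rw [← hT, hv, real_inner_smul_left] at hpair
  linarith

theorem div_add_sqrt_le_of_le_sub_mul_mul {ρ γ β t : ℝ} (hρ : 0 < ρ) (ht : 0 ≤ t)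
    (hγ : γ ≤ ρ * t) (hβ : β ≤ (ρ * t - γ) * t) :
    γ / (2 * ρ) + √((γ / (2 * ρ)) ^ 2 + β / ρ) ≤ t := by
  set c := γ / (2 * ρ)
  have hγc : γ = 2 * ρ * c := by simp only [c]; field_simp
  have hsq : c ^ 2 + β / ρ ≤ (t - c) ^ 2 := by
    have : β / ρ ≤ t ^ 2 - 2 * c * t := by
      rw [div_le_iff₀ hρ]
      nlinarith
    nlinarith
  have htc : 0 ≤ t - c := by
    rcases le_or_gt c 0 with hc | hc
    · linarith
    · nlinarith
  calc c + √(c ^ 2 + β / ρ) ≤ c + √((t - c) ^ 2) := by gcongr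
    _ = t := by rw [Real.sqrt_sq htc]; ring

theorem stmt4_general {n : ℕ} (A : Matrix (Fin n) (Fin n) ℝ) (hA : A.IsSymm)
    (b : EuclideanSpace ℝ (Fin n)) (ρ : ℝ) (hρ : 0 < ρ)
    (γ : ℝ) (v₁ : EuclideanSpace ℝ (Fin n)) (hv₁ : ‖v₁‖ = 1)
    (hev : Am A v₁ = (-γ) • v₁)
    (s : EuclideanSpace ℝ (Fin n))
    (hs1 : Am A s + (ρ * ‖s‖) • s + b = 0)
    (hs2 : ρ * ‖s‖ ≥ γ) :
    ‖s‖ ≥ γ/(2*ρ) + Real.sqrt ((γ/(2*ρ))^2 + |⟪v₁, b⟫|/ρ) := by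
  have hkey : (ρ * ‖s‖ - γ) * ⟪v₁, s⟫ = -⟪v₁, b⟫ := by
    simpa [sub_eq_add_neg] using hA.isSymmetric_Am.add_mul_inner_eigenvector_eq_neg_inner hev hs1
  have hcs : |⟪v₁, s⟫| ≤ ‖s‖ := by
    simpa [hv₁] using abs_real_inner_le_norm v₁ s
  have hb : |⟪v₁, b⟫| ≤ (ρ * ‖s‖ - γ) * ‖s‖ := by
    rw [← abs_neg, ← hkey, abs_mul, abs_of_nonneg (sub_nonneg.mpr hs2)]
    exact mul_le_mul_of_nonneg_left hcs (sub_nonneg.mpr hs2)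
  exact div_add_sqrt_le_of_le_sub_mul_mul hρ (norm_nonneg s) hs2 hb

theorem stmt4 {n : ℕ} (A : Matrix (Fin n) (Fin n) ℝ) (hA : A.IsSymm)
    (b : EuclideanSpace ℝ (Fin n)) (ρ : ℝ) (hρ : 0 < ρ)
    (γ : ℝ) (v₁ : EuclideanSpace ℝ (Fin n)) (hv₁ : ‖v₁‖ = 1)
    (hev : Am A v₁ = (-γ) • v₁)
    (hlb : ∀ x : EuclideanSpace ℝ (Fin n), -γ * ‖x‖^2 ≤ ⟪x, Am A x⟫)
    (hb1 : ⟪v₁, b⟫ ≠ 0)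
    (s : EuclideanSpace ℝ (Fin n))
    (hs1 : Am A s + (ρ * ‖s‖) • s + b = 0)
    (hs2 : ρ * ‖s‖ ≥ γ) :
    ‖s‖ ≥ γ/(2*ρ) + Real.sqrt ((γ/(2*ρ))^2 + |⟪v₁, b⟫|/ρ) :=
  stmt4_general A hA b ρ hρ γ v₁ hv₁ hev s hs1 hs2
end

section
/- Let f(x) = (1/2)xᵀAx + bᵀx + (ρ/3)‖x‖³ and let v₁ be a unit eigenvector of A for its smallest eigenvalue, with v₁ᵀb ≠ 0. If s and s′ are two points each satisfying ∇f = 0 and (v₁ᵀb)(v₁ᵀ·) ≤ 0 (i.e., ∇f(s)=0, (v₁ᵀb)(v₁ᵀs) ≤ 0, and the same for s′), and s additionally satisfies ρ‖s‖ ≥ −λ_min(A) (i.e., s is a global minimizer), then s′ = s. That is, the global minimizer is the unique critical point s′ of f with (v₁ᵀb)(v₁ᵀs′) ≤ 0. -/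
open scoped RealInnerProductSpace

set_option maxHeartbeats 1000000 in
theorem stmt6 {n : ℕ} (A : Matrix (Fin n) (Fin n) ℝ) (hA : A.IsSymm)
    (b : EuclideanSpace ℝ (Fin n)) (ρ : ℝ) (hρ : 0 < ρ)
    (γ : ℝ) (v₁ : EuclideanSpace ℝ (Fin n)) (hv₁ : ‖v₁‖ = 1)
    (hev : Am A v₁ = (-γ) • v₁)
    (hlb : ∀ x : EuclideanSpace ℝ (Fin n), -γ * ‖x‖^2 ≤ ⟪x, Am A x⟫)
    (hb1 : ⟪v₁, b⟫ ≠ 0)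
    (s s' : EuclideanSpace ℝ (Fin n))
    (hscrit : gradF A b ρ s = 0) (hssign : ⟪v₁, b⟫ * ⟪v₁, s⟫ ≤ 0)
    (hsglob : ρ * ‖s‖ ≥ γ)
    (hs'crit : gradF A b ρ s' = 0) (hs'sign : ⟪v₁, b⟫ * ⟪v₁, s'⟫ ≤ 0) :
    s' = s := by
  have hsym : ∀ x y : EuclideanSpace ℝ (Fin n), ⟪Am A x, y⟫ = ⟪x, Am A y⟫ := by
    have hH : A.IsHermitian := by
      rwa [Matrix.IsHermitian, Matrix.conjTranspose_eq_transpose_of_trivial]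
    have hS := Matrix.isHermitian_iff_isSymmetric.1 hH
    intro x y
    simpa [Am, ← Matrix.coe_toEuclideanCLM_eq_toEuclideanLin] using hS x y
  set β := ⟪v₁, b⟫ with hβ
  have key : ∀ x : EuclideanSpace ℝ (Fin n), gradF A b ρ x = 0 →
      (ρ * ‖x‖ - γ) * ⟪v₁, x⟫ = -β := by
    intro x hx
    have h0 : ⟪v₁, Am A x + b + (ρ * ‖x‖) • x⟫ = 0 := by
      rw [show Am A x + b + (ρ * ‖x‖) • x = gradF A b ρ x from rfl, hx, inner_zero_right]
    have h1 : ⟪v₁, Am A x⟫ = -γ * ⟪v₁, x⟫ := by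
      rw [← hsym, hev, inner_smul_left]
      simp [mul_comm]
    rw [inner_add_right, inner_add_right, h1, inner_smul_right] at h0
    ring_nf at h0 ⊢
    linarith
  have hkeys := key s hscrit
  have hkeys' := key s' hs'crit
  have hsgt : ρ * ‖s‖ - γ > 0 := by
    rcases lt_or_eq_of_le (by linarith [hsglob] : γ ≤ ρ * ‖s‖) with h | h
    · linarith
    · exfalso; apply hb1
      have h0 : (ρ * ‖s‖ - γ) = 0 := by linarith
      rw [h0, zero_mul] at hkeys; linarith
  have hs'gt : ρ * ‖s'‖ - γ > 0 := by
    by_contra h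
    push_neg at h
    have hβ2 : (0:ℝ) < β * β := by
      rcases lt_or_gt_of_ne hb1 with h' | h' <;> nlinarith
    have hmul : (ρ * ‖s'‖ - γ) * (β * ⟪v₁, s'⟫) = -(β * β) := by
      linear_combination β * hkeys'
    have hnn : (0:ℝ) ≤ (ρ * ‖s'‖ - γ) * (β * ⟪v₁, s'⟫) := by
      nlinarith [mul_nonneg (neg_nonneg.2 (by linarith : ρ * ‖s'‖ - γ ≤ 0))
        (neg_nonneg.2 hs'sign)]
    linarith
  by_contra hne
  have hu : s' - s ≠ 0 := sub_ne_zero.mpr hne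
  have hunorm : (0:ℝ) < ‖s' - s‖^2 := pow_pos (norm_pos_iff.2 hu) 2
  have hgs : Am A s + b + (ρ * ‖s‖) • s = 0 := hscrit
  have hgs' : Am A s' + b + (ρ * ‖s'‖) • s' = 0 := hs'crit
  have hdiff : Am A (s' - s) + ((ρ * ‖s'‖) • s' - (ρ * ‖s‖) • s)
      = (Am A s' + b + (ρ * ‖s'‖) • s') - (Am A s + b + (ρ * ‖s‖) • s) := by
    rw [map_sub]; abel
  rw [hgs, hgs', sub_zero] at hdiff
  have e1 : ⟪s', s'⟫ = ‖s'‖^2 := real_inner_self_eq_norm_sq s'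
  have e2 : ⟪s, s⟫ = ‖s‖^2 := real_inner_self_eq_norm_sq s
  have e3 : ⟪s', s⟫ = ⟪s, s'⟫ := real_inner_comm s s'
  have hip : ⟪s' - s, Am A (s' - s)⟫
      + (ρ * ‖s'‖ * (‖s'‖^2 - ⟪s, s'⟫) - ρ * ‖s‖ * (⟪s, s'⟫ - ‖s‖^2)) = 0 := by
    have h0 : ⟪s' - s, Am A (s' - s) + ((ρ * ‖s'‖) • s' - (ρ * ‖s‖) • s)⟫ = 0 := by
      rw [hdiff, inner_zero_right]
    simp only [inner_add_right, inner_sub_right, inner_sub_left, inner_smul_right,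
      e1, e2, e3] at h0 ⊢
    linarith
  have hlbu := hlb (s' - s)
  have hnormu : ‖s' - s‖^2 = ‖s'‖^2 - 2 * ⟪s, s'⟫ + ‖s‖^2 := by
    rw [← real_inner_self_eq_norm_sq]
    simp only [inner_sub_left, inner_sub_right, e1, e2, e3]
    ring
  have ha : (0:ℝ) ≤ ‖s‖ := norm_nonneg s
  have ha' : (0:ℝ) ≤ ‖s'‖ := norm_nonneg s'
  rw [hnormu] at hlbu hunorm
  nlinarith [hip, hlbu, hunorm, hsgt, hs'gt, hρ,
    mul_nonneg (mul_nonneg hρ.le (add_nonneg ha ha')) (sq_nonneg (‖s‖ - ‖s'‖)),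
    mul_pos (by linarith : (0:ℝ) < ρ * ‖s‖ + ρ * ‖s'‖ - 2*γ) hunorm]
end

section
/- Under the gradient descent setup (step size 0 < η ≤ 1/(4(β+ρR)), initialization x₀ = −rb/‖b‖ with 0 ≤ r ≤ R_c), for every iteration t ≥ 0 and every eigenvector index i (writing w^{(i)} = v_iᵀw in an orthonormal eigenbasis (v_i) of A): x_t^{(i)} b^{(i)} ≤ 0, b^{(i)} s^{(i)} ≤ 0, and x_t^{(i)} s^{(i)} ≥ 0, where s is the global minimizer. Consequently x_tᵀb ≤ 0, x_tᵀs ≥ 0, and sᵀb ≤ 0. -/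
open scoped RealInnerProductSpace

theorem abs_le_opNorm_of_apply_eq_smul {E : Type*} [NormedAddCommGroup E] [NormedSpace ℝ E]
    (T : E →L[ℝ] E) {u : E} (hu : u ≠ 0) {c : ℝ} (h : T u = c • u) : |c| ≤ ‖T‖ := by
  have := T.le_opNorm u
  rw [h, norm_smul, Real.norm_eq_abs] at this
  exact le_of_mul_le_mul_right this (norm_pos_iff.mpr hu)

theorem mul_nonneg_of_eq_mul_sub {y c : ℕ → ℝ} {a d η : ℝ} (hη : 0 ≤ η) (hc : ∀ t, 0 ≤ c t)
    (hy : ∀ t, y (t + 1) = c t * y t - η * a) (had : a * d ≤ 0) (h0 : 0 ≤ y 0 * d) :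
    ∀ t, 0 ≤ y t * d
  | 0 => h0
  | t + 1 => by
    rw [hy t]
    nlinarith [mul_nonneg (hc t) (mul_nonneg_of_eq_mul_sub hη hc hy had h0 t)]

theorem one_sub_mul_nonneg_of_le_inv {η l c : ℝ} (hη : 0 < η) (hηc : η ≤ 1 / (4 * c))
    (hl : l ≤ c) : 0 ≤ 1 - η * l := by
  rcases le_or_gt l 0 with hl0 | hl0
  · nlinarith
  have hc : 0 < 4 * c := by linarith
  rw [le_div_iff₀ hc] at hηc
  nlinarith

namespace OrthonormalBasis

variable {ι E : Type*} [Fintype ι] [NormedAddCommGroup E] [InnerProductSpace ℝ E]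
  (v : OrthonormalBasis ι ℝ E)

theorem inner_apply_of_apply_eq_smul (T : E →ₗ[ℝ] E) {μ : ι → ℝ}
    (h : ∀ i, T (v i) = μ i • v i) (i : ι) (w : E) : ⟪v i, T w⟫ = μ i * ⟪v i, w⟫ := by
  have hTw : T w = ∑ j, (μ j * ⟪v j, w⟫) • v j := by
    conv_lhs => rw [← v.sum_repr' w]
    simp only [map_sum, map_smul, h, smul_smul, mul_comm]
  rw [hTw, v.orthonormal.inner_right_fintype]

theorem inner_nonneg_of_forall_mul_nonneg {x y : E} (h : ∀ i, 0 ≤ ⟪v i, x⟫ * ⟪v i, y⟫) :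
    0 ≤ ⟪x, y⟫ := by
  rw [← v.sum_inner_mul_inner]
  exact Finset.sum_nonneg fun i _ => real_inner_comm (v i) x ▸ h i

theorem inner_nonpos_of_forall_mul_nonpos {x y : E} (h : ∀ i, ⟪v i, x⟫ * ⟪v i, y⟫ ≤ 0) :
    ⟪x, y⟫ ≤ 0 := by
  have := v.inner_nonneg_of_forall_mul_nonneg (x := x) (y := -y) fun i => by
    simpa only [inner_neg_right, mul_neg, neg_nonneg] using h i
  simpa only [inner_neg_right, neg_nonneg] using this

end OrthonormalBasis

section CubicRegularization

variable {n : ℕ} {A : Matrix (Fin n) (Fin n) ℝ} {b : EuclideanSpace ℝ (Fin n)} {ρ : ℝ}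
  {v : OrthonormalBasis (Fin n) ℝ (EuclideanSpace ℝ (Fin n))} {μ : Fin n → ℝ}

theorem inner_gradF (heig : ∀ i, Am A (v i) = μ i • v i) (i : Fin n)
    (w : EuclideanSpace ℝ (Fin n)) :
    ⟪v i, gradF A b ρ w⟫ = (μ i + ρ * ‖w‖) * ⟪v i, w⟫ + ⟪v i, b⟫ := by
  have hAw : ⟪v i, Am A w⟫ = μ i * ⟪v i, w⟫ :=
    v.inner_apply_of_apply_eq_smul (Am A).toLinearMap heig i w
  rw [gradF, inner_add_right, inner_add_right, inner_smul_right, hAw]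
  ring

theorem inner_mul_inner_nonpos_of_gradF_eq_zero (heig : ∀ i, Am A (v i) = μ i • v i)
    {s : EuclideanSpace ℝ (Fin n)} (hs : gradF A b ρ s = 0)
    (hpsd : ∀ y : EuclideanSpace ℝ (Fin n), 0 ≤ ⟪y, Am A y + (ρ * ‖s‖) • y⟫) (i : Fin n) :
    ⟪v i, b⟫ * ⟪v i, s⟫ ≤ 0 := by
  have hμs : 0 ≤ μ i + ρ * ‖s‖ := by
    simpa only [heig, ← add_smul, inner_smul_right, real_inner_self_eq_norm_sq,
      v.orthonormal.1 i, one_pow, mul_one] using hpsd (v i)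
  have hsi : (μ i + ρ * ‖s‖) * ⟪v i, s⟫ + ⟪v i, b⟫ = 0 := by
    rw [← inner_gradF heig, hs, inner_zero_right]
  rw [eq_neg_of_add_eq_zero_right hsi]
  nlinarith [mul_nonneg hμs (mul_self_nonneg ⟪v i, s⟫)]

theorem mul_inner_nonneg_of_gradF_step (heig : ∀ i, Am A (v i) = μ i • v i) {η : ℝ} (hη : 0 ≤ η)
    {x : ℕ → EuclideanSpace ℝ (Fin n)} (hstep : ∀ t, x (t + 1) = x t - η • gradF A b ρ (x t))
    {i : Fin n} (hfac : ∀ t, 0 ≤ 1 - η * (μ i + ρ * ‖x t‖)) {d : ℝ} (hbd : ⟪v i, b⟫ * d ≤ 0)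
    (h0 : 0 ≤ ⟪v i, x 0⟫ * d) (t : ℕ) : 0 ≤ ⟪v i, x t⟫ * d := by
  refine mul_nonneg_of_eq_mul_sub (y := fun t => ⟪v i, x t⟫) hη hfac (fun t => ?_) hbd h0 t
  rw [hstep, inner_sub_right, inner_smul_right, inner_gradF heig]
  ring

end CubicRegularization

theorem stmt9_general {n : ℕ} (A : Matrix (Fin n) (Fin n) ℝ)
    (b : EuclideanSpace ℝ (Fin n)) (ρ : ℝ) (hρ : 0 < ρ)
    (β : ℝ) (hβ : β = ‖Am A‖) (R : ℝ)
    (η : ℝ) (hη : 0 < η) (hη2 : η ≤ 1/(4*(β + ρ*R)))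
    (r : ℝ) (hr0 : 0 ≤ r)
    (x : ℕ → EuclideanSpace ℝ (Fin n))
    (hx0 : x 0 = -(r/‖b‖) • b)
    (hstep : ∀ t, x (t+1) = x t - η • gradF A b ρ (x t))
    (v : OrthonormalBasis (Fin n) ℝ (EuclideanSpace ℝ (Fin n)))
    (μ : Fin n → ℝ) (heig : ∀ i, Am A (v i) = μ i • v i)
    (s : EuclideanSpace ℝ (Fin n))
    (hs1 : Am A s + (ρ * ‖s‖) • s + b = 0)
    (hs2 : ∀ y : EuclideanSpace ℝ (Fin n), 0 ≤ ⟪y, Am A y + (ρ * ‖s‖) • y⟫)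
    (hbound : ∀ t, ‖x t‖ ≤ R) :
    (∀ t : ℕ, ∀ i : Fin n,
      ⟪v i, x t⟫ * ⟪v i, b⟫ ≤ 0 ∧ ⟪v i, b⟫ * ⟪v i, s⟫ ≤ 0 ∧
      ⟪v i, x t⟫ * ⟪v i, s⟫ ≥ 0) ∧
    (∀ t : ℕ, ⟪x t, b⟫ ≤ 0 ∧ ⟪x t, s⟫ ≥ 0) ∧ ⟪s, b⟫ ≤ 0 := by
  have hμβ : ∀ i, μ i ≤ β := fun i => hβ ▸ (le_abs_self _).trans
    (abs_le_opNorm_of_apply_eq_smul _ (v.orthonormal.ne_zero i) (heig i))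
  have hbs := inner_mul_inner_nonpos_of_gradF_eq_zero heig
    (by rw [gradF, add_right_comm, hs1]) hs2
  have hcoef : ∀ i t, 0 ≤ 1 - η * (μ i + ρ * ‖x t‖) := fun i t =>
    one_sub_mul_nonneg_of_le_inv hη hη2
      (add_le_add (hμβ i) (mul_le_mul_of_nonneg_left (hbound t) hρ.le))
  have hx0i : ∀ i, ⟪v i, x 0⟫ = -(r / ‖b‖) * ⟪v i, b⟫ := fun i => by
    rw [hx0, inner_smul_right]
  have hr : 0 ≤ r / ‖b‖ := div_nonneg hr0 (norm_nonneg b)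
  have hxb : ∀ t i, 0 ≤ ⟪v i, x t⟫ * -⟪v i, b⟫ := fun t i =>
    mul_inner_nonneg_of_gradF_step heig hη.le hstep (hcoef i) (by nlinarith [sq_nonneg ⟪v i, b⟫])
      (by rw [hx0i]; nlinarith [mul_nonneg hr (sq_nonneg ⟪v i, b⟫)]) t
  have hxs : ∀ t i, 0 ≤ ⟪v i, x t⟫ * ⟪v i, s⟫ := fun t i =>
    mul_inner_nonneg_of_gradF_step heig hη.le hstep (hcoef i) (hbs i)
      (by rw [hx0i]; nlinarith [mul_nonneg hr (neg_nonneg.mpr (hbs i))]) t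
  have hxb' : ∀ t i, ⟪v i, x t⟫ * ⟪v i, b⟫ ≤ 0 := fun t i => by linarith [hxb t i]
  refine ⟨fun t i => ⟨hxb' t i, hbs i, hxs t i⟩, fun t => ⟨?_, ?_⟩, ?_⟩
  · exact v.inner_nonpos_of_forall_mul_nonpos (hxb' t)
  · exact v.inner_nonneg_of_forall_mul_nonneg (hxs t)
  · exact v.inner_nonpos_of_forall_mul_nonpos fun i => by linarith [hbs i]

theorem stmt9 {n : ℕ} (A : Matrix (Fin n) (Fin n) ℝ) (hA : A.IsSymm)
    (b : EuclideanSpace ℝ (Fin n)) (hb : b ≠ 0) (ρ : ℝ) (hρ : 0 < ρ)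
    (β : ℝ) (hβ : β = ‖Am A‖) (R Rc : ℝ)
    (hR : R = β/(2*ρ) + Real.sqrt ((β/(2*ρ))^2 + ‖b‖/ρ))
    (hRc : Rc = -(⟪b, Am A b⟫/(2*ρ*‖b‖^2))
        + Real.sqrt ((⟪b, Am A b⟫/(2*ρ*‖b‖^2))^2 + ‖b‖/ρ))
    (η : ℝ) (hη : 0 < η) (hη2 : η ≤ 1/(4*(β + ρ*R)))
    (r : ℝ) (hr0 : 0 ≤ r) (hrRc : r ≤ Rc)
    (x : ℕ → EuclideanSpace ℝ (Fin n))
    (hx0 : x 0 = -(r/‖b‖) • b)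
    (hstep : ∀ t, x (t+1) = x t - η • gradF A b ρ (x t))
    (v : OrthonormalBasis (Fin n) ℝ (EuclideanSpace ℝ (Fin n)))
    (μ : Fin n → ℝ) (heig : ∀ i, Am A (v i) = μ i • v i)
    (s : EuclideanSpace ℝ (Fin n))
    (hs1 : Am A s + (ρ * ‖s‖) • s + b = 0)
    (hs2 : ∀ y : EuclideanSpace ℝ (Fin n), 0 ≤ ⟪y, Am A y + (ρ * ‖s‖) • y⟫)
    (hbound : ∀ t, ‖x t‖ ≤ R) :
    (∀ t : ℕ, ∀ i : Fin n,
      ⟪v i, x t⟫ * ⟪v i, b⟫ ≤ 0 ∧ ⟪v i, b⟫ * ⟪v i, s⟫ ≤ 0 ∧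
      ⟪v i, x t⟫ * ⟪v i, s⟫ ≥ 0) ∧
    (∀ t : ℕ, ⟪x t, b⟫ ≤ 0 ∧ ⟪x t, s⟫ ≥ 0) ∧ ⟪s, b⟫ ≤ 0 :=
  stmt9_general A b ρ hρ β hβ R η hη hη2 r hr0 x hx0 hstep v μ heig s hs1 hs2 hbound
end

section
/- Let b̃ = b + σq where q is uniformly distributed on the unit sphere in ℝᵈ with d > 2 and σ > 0, and let v₁ be a fixed unit vector. Then P(|v₁ᵀb̃| ≤ √π σδ/√(2d)) ≤ δ for any δ ∈ (0,1). -/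
open scoped RealInnerProductSpace
open MeasureTheory

/-- The uniform probability measure on the unit sphere of `EuclideanSpace ℝ (Fin d)`,
obtained by normalizing the surface measure induced by Lebesgue measure. -/
noncomputable def uniformSphere (d : ℕ) :
    Measure (Metric.sphere (0 : EuclideanSpace ℝ (Fin d)) 1) :=
  ((volume : Measure (EuclideanSpace ℝ (Fin d))).toSphere Set.univ)⁻¹ •
    (volume : Measure (EuclideanSpace ℝ (Fin d))).toSphere

/-!
The uniform measure of the band `{q | ⟪v, q⟫ ∈ [a, b]}` on the sphere of `ℝ^(m+1)` is the volume
of the cone over the band divided by the volume of the unit ball. Rotating `v` to the last axis of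
`ℝ^m × ℝ`, the cone becomes a sector of the unit ball; slicing it along `ℝ^m` and substituting
`t = ρ s / √(1 - s²)` (`s` the cosine of the angle to the axis) in the slice at distance `ρ`, its
volume is at most `∫_a^b ∫_{‖y‖ ≤ √(1 - s²)} ‖y‖ (1 - s²)^(-3/2) dy ds ≤ (b - a) m/(m+1) vol(B^m)`.
Hence `⟪v, q⟫` has density at most `m vol(B^m) / ((m+1) vol(B^(m+1))) = Γ((m+1)/2) / (√π Γ(m/2))`,
which is at most `√((m+1)/(2π))` by log-convexity of `Γ`. The event `|⟪v, b + σ q⟫| ≤ ε` is such a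
band of width `2ε/σ`, and `(2ε/σ) √(d/(2π)) = δ` for `ε = √π σ δ / √(2d)`.
-/

open Real Set Metric Module
open scoped ENNReal Pointwise

theorem Real.Gamma_add_half_le_Gamma_mul_sqrt {x : ℝ} (hx : 0 < x) :
    Gamma (x + 1 / 2) ≤ Gamma x * √x := by
  have hΓ := (Gamma_pos_of_pos hx).le
  calc Gamma (x + 1 / 2) = Gamma ((1 / 2) * x + (1 / 2) * (x + 1)) := by ring_nf
    _ ≤ Gamma x ^ (1 / 2 : ℝ) * Gamma (x + 1) ^ (1 / 2 : ℝ) :=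
      Gamma_mul_add_mul_le_rpow_Gamma_mul_rpow_Gamma hx (by linarith) (by norm_num)
        (by norm_num) (by norm_num)
    _ = Gamma x * √x := by
      rw [Gamma_add_one hx.ne', ← mul_rpow hΓ (by positivity), ← sqrt_eq_rpow,
        show Gamma x * (x * Gamma x) = Gamma x ^ 2 * x by ring, sqrt_mul (by positivity),
        sqrt_sq hΓ]

lemma Real.Gamma_half_succ_div_le_sqrt {x : ℝ} (hx : 0 < x) :
    Gamma ((x + 1) / 2) / (√π * Gamma (x / 2)) ≤ √((x + 1) / (2 * π)) := by
  have hΓ := Gamma_pos_of_pos (half_pos hx)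
  have hGautschi := Gamma_add_half_le_Gamma_mul_sqrt (half_pos hx)
  rw [show x / 2 + 1 / 2 = (x + 1) / 2 by ring] at hGautschi
  calc Gamma ((x + 1) / 2) / (√π * Gamma (x / 2)) ≤ √(x / 2) / √π := by
        rw [div_le_div_iff₀ (by positivity) (sqrt_pos.2 pi_pos)]
        nlinarith [sqrt_nonneg π]
    _ ≤ √((x + 1) / 2) / √π := by gcongr; linarith
    _ = √((x + 1) / (2 * π)) := by rw [← sqrt_div' _ pi_pos.le, div_div]

lemma EuclideanSpace.volume_real_ball_zero_one (n : ℕ) [NeZero n] :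
    volume.real (ball (0 : EuclideanSpace ℝ (Fin n)) 1) = √π ^ n / Gamma (n / 2 + 1) := by
  rw [measureReal_def, EuclideanSpace.volume_ball, Fintype.card_fin, ENNReal.ofReal_one, one_pow,
    one_mul, ENNReal.toReal_ofReal (div_nonneg (by positivity)
      (Gamma_pos_of_pos (by positivity)).le)]

lemma EuclideanSpace.volume_real_ball_succ {m : ℕ} (hm : m ≠ 0) :
    m / (m + 1) * volume.real (ball (0 : EuclideanSpace ℝ (Fin m)) 1) =
      Gamma ((m + 1) / 2) / (√π * Gamma (m / 2)) *
        volume.real (ball (0 : EuclideanSpace ℝ (Fin (m + 1))) 1) := by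
  have : NeZero m := ⟨hm⟩
  rw [volume_real_ball_zero_one, volume_real_ball_zero_one, Gamma_add_one (by positivity),
    show ((m + 1 : ℕ) : ℝ) / 2 + 1 = (m + 1) / 2 + 1 by push_cast; ring,
    Gamma_add_one (by positivity)]
  have := Gamma_pos_of_pos (by positivity : (0 : ℝ) < m / 2)
  have := Gamma_pos_of_pos (by positivity : (0 : ℝ) < (m + 1) / 2)
  have := sqrt_pos.2 pi_pos
  field_simp
  ring

lemma hasDerivAt_div_sqrt_one_sub_sq {s : ℝ} (hs : s ^ 2 < 1) :
    HasDerivAt (fun s => s / √(1 - s ^ 2)) (√(1 - s ^ 2) ^ 3)⁻¹ s := by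
  have h1 : 0 < 1 - s ^ 2 := by linarith
  have hR : 0 < √(1 - s ^ 2) := sqrt_pos.2 h1
  have hsqrt : HasDerivAt (fun s : ℝ => √(1 - s ^ 2)) (-(2 * s) / (2 * √(1 - s ^ 2))) s := by
    refine HasDerivAt.sqrt ?_ h1.ne'
    simpa using (hasDerivAt_pow 2 s).const_sub 1
  refine ((hasDerivAt_id' s).fun_div hsqrt hR.ne').congr_deriv ?_
  have h2 : √(1 - s ^ 2) ^ 2 = 1 - s ^ 2 := sq_sqrt h1.le
  field_simp
  linear_combination h2

lemma strictMonoOn_div_sqrt_one_sub_sq :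
    StrictMonoOn (fun s => s / √(1 - s ^ 2)) (Ioo (-1) 1) := by
  have hsq : ∀ s ∈ Ioo (-1 : ℝ) 1, s ^ 2 < 1 := fun s hs => by nlinarith [hs.1, hs.2]
  refine strictMonoOn_of_hasDerivWithinAt_pos (f' := fun s => (√(1 - s ^ 2) ^ 3)⁻¹)
    (convex_Ioo _ _) ?_ ?_ ?_
  · exact fun s hs => (hasDerivAt_div_sqrt_one_sub_sq (hsq s hs)).continuousAt.continuousWithinAt
  · rw [interior_Ioo]
    exact fun s hs => (hasDerivAt_div_sqrt_one_sub_sq (hsq s hs)).hasDerivWithinAt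
  · rw [interior_Ioo]
    exact fun s hs => inv_pos.2 (pow_pos (sqrt_pos.2 (by linarith [hsq s hs])) 3)

lemma volume_sector_slice_le {ρ : ℝ} (hρ : 0 < ρ) (a b : ℝ) :
    volume {t : ℝ | t ^ 2 + ρ ^ 2 ≤ 1 ∧ a * √(t ^ 2 + ρ ^ 2) ≤ t ∧ t ≤ b * √(t ^ 2 + ρ ^ 2)} ≤
      ∫⁻ s in Icc a b ∩ {s | s ^ 2 + ρ ^ 2 ≤ 1}, ENNReal.ofReal (ρ * (√(1 - s ^ 2) ^ 3)⁻¹) := by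
  set S := Icc a b ∩ {s : ℝ | s ^ 2 + ρ ^ 2 ≤ 1}
  have hS : ∀ s ∈ S, s ^ 2 < 1 := fun s hs => by
    have : s ^ 2 + ρ ^ 2 ≤ 1 := hs.2
    nlinarith
  have hSmeas : MeasurableSet S :=
    measurableSet_Icc.inter (measurableSet_le (by fun_prop) (by fun_prop))
  have hinj : InjOn (fun s => ρ * (s / √(1 - s ^ 2))) S := by
    intro x hx y hy hxy
    refine strictMonoOn_div_sqrt_one_sub_sq.injOn ?_ ?_ (mul_left_cancel₀ hρ.ne' hxy) <;>
      exact abs_lt.1 ((sq_lt_one_iff_abs_lt_one _).1 (hS _ ‹_›))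
  have hsub : {t : ℝ | t ^ 2 + ρ ^ 2 ≤ 1 ∧ a * √(t ^ 2 + ρ ^ 2) ≤ t ∧ t ≤ b * √(t ^ 2 + ρ ^ 2)} ⊆
      (fun s => ρ * (s / √(1 - s ^ 2))) '' S := by
    rintro t ⟨ht1, hta, htb⟩
    set R := √(t ^ 2 + ρ ^ 2)
    have hR2 : R ^ 2 = t ^ 2 + ρ ^ 2 := sq_sqrt (by positivity)
    have hR : 0 < R := sqrt_pos.2 (by positivity)
    have hsq : 1 - (t / R) ^ 2 = (ρ / R) ^ 2 := by field_simp; linarith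
    refine ⟨t / R, ⟨⟨(le_div_iff₀ hR).2 hta, (div_le_iff₀ hR).2 htb⟩, ?_⟩, ?_⟩
    · have : (t / R) ^ 2 + ρ ^ 2 * R ^ 2 / R ^ 2 ≤ 1 := by
        rw [div_pow, ← add_div, div_le_one (by positivity)]
        nlinarith
      simpa [hR.ne'] using this
    · simp only [hsq, sqrt_sq (div_pos hρ hR).le]
      field_simp
  calc volume _ ≤ volume ((fun s => ρ * (s / √(1 - s ^ 2))) '' S) := measure_mono hsub
    _ = ∫⁻ s in S, ENNReal.ofReal |ρ * (√(1 - s ^ 2) ^ 3)⁻¹| := by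
      simpa using lintegral_image_eq_lintegral_abs_deriv_mul hSmeas
        (fun s hs => ((hasDerivAt_div_sqrt_one_sub_sq (hS s hs)).const_mul ρ).hasDerivWithinAt)
        hinj 1
    _ = _ := setLIntegral_congr_fun hSmeas fun s _ => by rw [abs_of_nonneg (by positivity)]

section Sector

variable {E : Type*} [NormedAddCommGroup E]

def unitBallSector (a b : ℝ) : Set (E × ℝ) :=
  {p | p.2 ^ 2 + ‖p.1‖ ^ 2 ≤ 1 ∧
    a * √(p.2 ^ 2 + ‖p.1‖ ^ 2) ≤ p.2 ∧ p.2 ≤ b * √(p.2 ^ 2 + ‖p.1‖ ^ 2)}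

/-- The Jacobian `‖y‖ (1 - s²)^(-3/2)` of `(y, s) ↦ (y, ‖y‖ s / √(1 - s²))`, restricted to the
preimage of `unitBallSector a b`. -/
noncomputable def sectorWeight (a b : ℝ) : E × ℝ → ℝ≥0∞ :=
  {p | p.2 ∈ Icc a b ∧ p.2 ^ 2 + ‖p.1‖ ^ 2 ≤ 1}.indicator
    fun p => ENNReal.ofReal (‖p.1‖ * (√(1 - p.2 ^ 2) ^ 3)⁻¹)

variable [MeasurableSpace E] [BorelSpace E]

lemma measurableSet_unitBallSector (a b : ℝ) : MeasurableSet (unitBallSector (E := E) a b) :=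
  measurableSet_setOfPred.2 (by fun_prop)

lemma measurable_sectorWeight (a b : ℝ) : Measurable (sectorWeight (E := E) a b) :=
  (by fun_prop : Measurable fun p : E × ℝ =>
      ENNReal.ofReal (‖p.1‖ * (√(1 - p.2 ^ 2) ^ 3)⁻¹)).indicator
    (measurableSet_setOfPred.2 (by fun_prop (disch := exact measurableSet_Icc)))

variable [NormedSpace ℝ E] [FiniteDimensional ℝ E] (μ : Measure E) [μ.IsAddHaarMeasure]

lemma prod_measure_unitBallSector_le_lintegral [Nontrivial E] (a b : ℝ) :
    (μ.prod volume) (unitBallSector a b) ≤ ∫⁻ p, sectorWeight a b p ∂(μ.prod volume) := by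
  rw [Measure.prod_apply (measurableSet_unitBallSector a b),
    lintegral_prod _ (measurable_sectorWeight a b).aemeasurable]
  refine lintegral_mono_ae ?_
  filter_upwards [compl_mem_ae_iff.2 (measure_singleton (0 : E))] with y hy
  have : (fun s => sectorWeight a b (y, s)) = (Icc a b ∩ {s | s ^ 2 + ‖y‖ ^ 2 ≤ 1}).indicator
      fun s => ENNReal.ofReal (‖y‖ * (√(1 - s ^ 2) ^ 3)⁻¹) := rfl
  rw [this, lintegral_indicator
    (measurableSet_Icc.inter (measurableSet_le (by fun_prop) measurable_const))]
  exact volume_sector_slice_le (norm_pos_iff.2 hy) a b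

lemma integral_closedBall_norm (hE : 0 < finrank ℝ E) {R : ℝ} (hR : 0 ≤ R) :
    ∫ y in closedBall 0 R, ‖y‖ ∂μ =
      finrank ℝ E / (finrank ℝ E + 1) * μ.real (ball 0 1) * R ^ (finrank ℝ E + 1) := by
  have : Nontrivial E := nontrivial_of_finrank_pos hE
  have hradial : ∫ r in Ioi (0 : ℝ), r ^ (finrank ℝ E - 1) • (Iic R).indicator id r =
      R ^ (finrank ℝ E + 1) / (finrank ℝ E + 1) := by
    have hpow : ∀ r : ℝ, r ^ (finrank ℝ E - 1) • (Iic R).indicator id r =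
        (Iic R).indicator (· ^ finrank ℝ E) r := fun r => by
      by_cases hr : r ≤ R
      · simp [hr, ← pow_succ, Nat.sub_add_cancel hE]
      · simp [hr]
    simp_rw [hpow]
    rw [setIntegral_indicator measurableSet_Iic, Ioi_inter_Iic,
      ← intervalIntegral.integral_of_le hR, integral_pow]
    simp
  have hnorm : (closedBall (0 : E) R).indicator norm = fun y => (Iic R).indicator id ‖y‖ := by
    ext y; by_cases hy : ‖y‖ ≤ R <;> simp [hy, indicator]
  rw [← integral_indicator measurableSet_closedBall, hnorm, integral_fun_norm_addHaar, hradial,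
    nsmul_eq_mul, smul_eq_mul]
  field_simp

lemma setLIntegral_norm_mul_le (hE : 2 ≤ finrank ℝ E) (s : ℝ) :
    ∫⁻ y in {y : E | s ^ 2 + ‖y‖ ^ 2 ≤ 1}, ENNReal.ofReal (‖y‖ * (√(1 - s ^ 2) ^ 3)⁻¹) ∂μ ≤
      ENNReal.ofReal (finrank ℝ E / (finrank ℝ E + 1) * μ.real (ball 0 1)) := by
  rcases lt_or_ge 1 (s ^ 2) with hs | hs
  · have : {y : E | s ^ 2 + ‖y‖ ^ 2 ≤ 1} = ∅ :=
      eq_empty_of_forall_notMem fun y hy => by nlinarith [hy.out, sq_nonneg ‖y‖]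
    simp [this]
  set R := √(1 - s ^ 2)
  have hR0 : 0 ≤ R := sqrt_nonneg _
  have hR1 : R ≤ 1 := sqrt_le_one.2 (by nlinarith)
  have hball : {y : E | s ^ 2 + ‖y‖ ^ 2 ≤ 1} = closedBall 0 R := by
    ext y
    rw [mem_closedBall_zero_iff, mem_ofPred_eq, le_sqrt (norm_nonneg y) (by linarith)]
    constructor <;> intro h <;> linarith
  -- The Jacobian `R⁻³` of the substitution is absorbed by the fibre, since `finrank ℝ E ≥ 2`.
  have hpow : R ^ (finrank ℝ E + 1) * (R ^ 3)⁻¹ ≤ 1 := by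
    rcases hR0.eq_or_lt with hR | hR
    · simp [← hR]
    rw [← div_eq_mul_inv, div_le_one (by positivity)]
    calc R ^ (finrank ℝ E + 1) = R ^ (finrank ℝ E - 2) * R ^ 3 := by
          rw [← pow_add]; congr 1; omega
      _ ≤ R ^ 3 := mul_le_of_le_one_left (by positivity) (pow_le_one₀ hR0 hR1)
  rw [hball, ← ofReal_integral_eq_lintegral_ofReal]
  · refine ENNReal.ofReal_le_ofReal ?_
    rw [integral_mul_const, integral_closedBall_norm μ (by omega) hR0]
    have : 0 ≤ finrank ℝ E / (finrank ℝ E + 1) * μ.real (ball 0 1) := by positivity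
    calc _ = finrank ℝ E / (finrank ℝ E + 1) * μ.real (ball 0 1) *
          (R ^ (finrank ℝ E + 1) * (R ^ 3)⁻¹) := by ring
      _ ≤ _ := mul_le_of_le_one_right this hpow
  · exact (continuous_norm.mul continuous_const).continuousOn.integrableOn_compact
      (isCompact_closedBall _ _)
  · exact ae_of_all _ fun y => by positivity

lemma lintegral_sectorWeight_le (hE : 2 ≤ finrank ℝ E) (a b : ℝ) :
    ∫⁻ p, sectorWeight a b p ∂(μ.prod volume) ≤
      ENNReal.ofReal ((b - a) * (finrank ℝ E / (finrank ℝ E + 1) * μ.real (ball 0 1))) := by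
  set C := finrank ℝ E / (finrank ℝ E + 1) * μ.real (ball (0 : E) 1)
  have hfibre : ∀ s, ∫⁻ y, sectorWeight a b (y, s) ∂μ ≤
      (Icc a b).indicator (fun _ => ENNReal.ofReal C) s := by
    intro s
    by_cases hs : s ∈ Icc a b
    · have : (fun y : E => sectorWeight a b (y, s)) = {y : E | s ^ 2 + ‖y‖ ^ 2 ≤ 1}.indicator
          fun y => ENNReal.ofReal (‖y‖ * (√(1 - s ^ 2) ^ 3)⁻¹) := by
        ext y; simp only [sectorWeight, indicator_apply, mem_ofPred_eq, hs, true_and]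
      rw [this, lintegral_indicator (measurableSet_le (by fun_prop) measurable_const),
        indicator_of_mem hs]
      exact setLIntegral_norm_mul_le μ hE s
    · have : (fun y : E => sectorWeight a b (y, s)) = fun _ => 0 := by
        ext y; simp only [sectorWeight, indicator_apply, mem_ofPred_eq, hs, false_and, if_false]
      rw [this, lintegral_zero]
      exact zero_le
  calc ∫⁻ p, sectorWeight a b p ∂(μ.prod volume)
      = ∫⁻ s, ∫⁻ y, sectorWeight a b (y, s) ∂μ :=
        lintegral_prod_symm _ (measurable_sectorWeight a b).aemeasurable
    _ ≤ ∫⁻ s, (Icc a b).indicator (fun _ => ENNReal.ofReal C) s := lintegral_mono hfibre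
    _ = _ := by
      rw [lintegral_indicator_const measurableSet_Icc, Real.volume_Icc,
        ENNReal.ofReal_mul' (mul_nonneg (by positivity) measureReal_nonneg), mul_comm]

lemma prod_measure_unitBallSector_le (hE : 2 ≤ finrank ℝ E) (a b : ℝ) :
    (μ.prod volume) (unitBallSector a b) ≤
      ENNReal.ofReal ((b - a) * (finrank ℝ E / (finrank ℝ E + 1) * μ.real (ball 0 1))) :=
  have : Nontrivial E := nontrivial_of_finrank_pos (by omega : 0 < finrank ℝ E)
  (prod_measure_unitBallSector_le_lintegral μ a b).trans (lintegral_sectorWeight_le μ hE a b)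

end Sector

lemma exists_measurePreserving_inner_prod {F : Type*} [NormedAddCommGroup F]
    [InnerProductSpace ℝ F] [FiniteDimensional ℝ F] [MeasurableSpace F] [BorelSpace F] {m : ℕ}
    (hF : finrank ℝ F = m + 1) {v : F} (hv : ‖v‖ = 1) :
    ∃ χ : F → EuclideanSpace ℝ (Fin m) × ℝ, MeasurePreserving χ ∧
      ∀ x, (χ x).2 = ⟪v, x⟫ ∧ (χ x).2 ^ 2 + ‖(χ x).1‖ ^ 2 = ‖x‖ ^ 2 := by
  have hv' : Orthonormal ℝ (({0} : Set (Fin (m + 1))).domRestrict fun _ => v) :=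
    ⟨fun _ => hv, fun i j hij => absurd (Subtype.ext (i.2.trans j.2.symm)) hij⟩
  obtain ⟨B, hB⟩ := hv'.exists_orthonormalBasis_extension_of_card_eq (by simp [hF])
  have hswap : MeasurePreserving (Prod.swap : ℝ × EuclideanSpace ℝ (Fin m) → _) := by
    simpa only [← Measure.volume_eq_prod] using
      Measure.measurePreserving_swap (μ := (volume : Measure ℝ))
        (ν := (volume : Measure (EuclideanSpace ℝ (Fin m))))
  have htoLp := (MeasurePreserving.id (volume : Measure ℝ)).prod
    (EuclideanSpace.volume_preserving_symm_measurableEquiv_toLp (Fin m)).symm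
  rw [← Measure.volume_eq_prod, ← Measure.volume_eq_prod] at htoLp
  refine ⟨fun x => (WithLp.toLp 2 fun j => B.repr x j.succ, B.repr x 0), ?_, fun x => ⟨?_, ?_⟩⟩
  · exact hswap.comp (htoLp.comp ((volume_preserving_piFinSuccAbove (fun _ => ℝ) 0).comp
      ((EuclideanSpace.volume_preserving_symm_measurableEquiv_toLp _).comp
        B.measurePreserving_repr)))
  · dsimp only
    rw [B.repr_apply_apply, hB 0 rfl, real_inner_comm]
  · dsimp only
    rw [← B.repr.norm_map x, EuclideanSpace.norm_sq_eq, EuclideanSpace.norm_sq_eq,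
      Fin.sum_univ_succ]
    simp

lemma Ioo_smul_sphere_inner_mem_Icc_subset {F : Type*} [NormedAddCommGroup F]
    [InnerProductSpace ℝ F] (v : F) (a b : ℝ) :
    Ioo (0 : ℝ) 1 • (Subtype.val '' {q : sphere (0 : F) 1 | ⟪v, (q : F)⟫ ∈ Icc a b}) ⊆
      {x | ‖x‖ ≤ 1 ∧ a * ‖x‖ ≤ ⟪v, x⟫ ∧ ⟪v, x⟫ ≤ b * ‖x‖} := by
  rintro _ ⟨r, ⟨hr0, hr1⟩, _, ⟨q, ⟨hqa, hqb⟩, rfl⟩, rfl⟩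
  have hq : ‖(q : F)‖ = 1 := by simp
  simp only [mem_ofPred_eq, norm_smul, hq, real_inner_smul_right, Real.norm_eq_abs,
    abs_of_pos hr0, mul_one]
  exact ⟨hr1.le, by nlinarith, by nlinarith⟩

lemma uniformSphere_apply {d : ℕ} (hd : d ≠ 0)
    {A : Set (sphere (0 : EuclideanSpace ℝ (Fin d)) 1)} (hA : MeasurableSet A) :
    uniformSphere d A = volume (Ioo (0 : ℝ) 1 • (Subtype.val '' A)) /
      volume (ball (0 : EuclideanSpace ℝ (Fin d)) 1) := by
  rw [uniformSphere, Measure.smul_apply, smul_eq_mul, Measure.toSphere_apply' _ hA,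
    Measure.toSphere_apply_univ, finrank_euclideanSpace_fin, ← ENNReal.div_eq_inv_mul,
    ENNReal.mul_div_mul_left _ _ (by simpa using hd) (ENNReal.natCast_ne_top d)]

lemma uniformSphere_inner_mem_Icc_le_mul_Gamma {m : ℕ} (hm : 2 ≤ m)
    {v : EuclideanSpace ℝ (Fin (m + 1))} (hv : ‖v‖ = 1) (a b : ℝ) :
    uniformSphere (m + 1) {q | ⟪v, (q : EuclideanSpace ℝ (Fin (m + 1)))⟫ ∈ Icc a b} ≤
      ENNReal.ofReal ((b - a) * (Gamma ((m + 1) / 2) / (√π * Gamma (m / 2)))) := by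
  obtain ⟨χ, hχ, hχx⟩ := exists_measurePreserving_inner_prod (m := m) (by simp) hv
  have hcone : {x | ‖x‖ ≤ 1 ∧ a * ‖x‖ ≤ ⟪v, x⟫ ∧ ⟪v, x⟫ ≤ b * ‖x‖} ⊆
      χ ⁻¹' unitBallSector a b := by
    intro x hx
    obtain ⟨h2, hnorm⟩ := hχx x
    rw [mem_preimage, unitBallSector, mem_ofPred_eq, hnorm, sqrt_sq (norm_nonneg x), h2]
    exact ⟨by nlinarith [norm_nonneg x, hx.1], hx.2⟩
  have hA : MeasurableSet {q : sphere (0 : EuclideanSpace ℝ (Fin (m + 1))) 1 |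
      ⟪v, (q : EuclideanSpace ℝ (Fin (m + 1)))⟫ ∈ Icc a b} :=
    measurableSet_Icc.preimage (by fun_prop)
  rw [uniformSphere_apply (by omega) hA]
  refine ENNReal.div_le_of_le_mul ?_
  calc volume (Ioo (0 : ℝ) 1 • (Subtype.val '' _)) ≤ volume (χ ⁻¹' unitBallSector a b) :=
        measure_mono ((Ioo_smul_sphere_inner_mem_Icc_subset v a b).trans hcone)
    _ ≤ volume (unitBallSector a b) :=
        (Measure.le_map_apply hχ.aemeasurable _).trans_eq (by rw [hχ.map_eq])
    _ ≤ ENNReal.ofReal ((b - a) *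
          (m / (m + 1) * volume.real (ball (0 : EuclideanSpace ℝ (Fin m)) 1))) := by
      have := prod_measure_unitBallSector_le (volume : Measure (EuclideanSpace ℝ (Fin m)))
        (by simpa) a b
      rwa [finrank_euclideanSpace_fin, ← Measure.volume_eq_prod] at this
    _ = _ := by
      rw [EuclideanSpace.volume_real_ball_succ (by omega), ← mul_assoc,
        ENNReal.ofReal_mul' measureReal_nonneg, ofReal_measureReal]

lemma uniformSphere_inner_mem_Icc_le {d : ℕ} (hd : 2 < d) {v : EuclideanSpace ℝ (Fin d)}
    (hv : ‖v‖ = 1) (a b : ℝ) :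
    uniformSphere d {q | ⟪v, (q : EuclideanSpace ℝ (Fin d))⟫ ∈ Icc a b} ≤
      ENNReal.ofReal ((b - a) * √(d / (2 * π))) := by
  obtain ⟨m, rfl⟩ : ∃ m, d = m + 1 := ⟨d - 1, by omega⟩
  have hm : (0 : ℝ) < m := by exact_mod_cast (by omega : 0 < m)
  refine (uniformSphere_inner_mem_Icc_le_mul_Gamma (by omega) hv a b).trans ?_
  rcases le_total a b with hab | hba
  · refine ENNReal.ofReal_le_ofReal (mul_le_mul_of_nonneg_left ?_ (sub_nonneg.2 hab))
    exact_mod_cast Gamma_half_succ_div_le_sqrt hm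
  · have := Gamma_pos_of_pos (half_pos hm)
    rw [ENNReal.ofReal_of_nonpos (mul_nonpos_of_nonpos_of_nonneg (sub_nonpos.2 hba)
      (div_nonneg (Gamma_pos_of_pos (by positivity)).le (by positivity)))]
    exact zero_le

theorem stmt16_general {d : ℕ} (hd : 2 < d)
    (b : EuclideanSpace ℝ (Fin d)) (σ : ℝ) (hσ : 0 < σ)
    (v₁ : EuclideanSpace ℝ (Fin d)) (hv₁ : ‖v₁‖ = 1)
    (δ : ℝ) :
    uniformSphere d
      {q : Metric.sphere (0 : EuclideanSpace ℝ (Fin d)) 1 |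
        |⟪v₁, b + σ • (q : EuclideanSpace ℝ (Fin d))⟫| ≤
          Real.sqrt Real.pi * σ * δ / Real.sqrt (2 * d)} ≤
    ENNReal.ofReal δ := by
  set ε := √π * σ * δ / √(2 * d)
  have hband : {q : sphere (0 : EuclideanSpace ℝ (Fin d)) 1 |
      |⟪v₁, b + σ • (q : EuclideanSpace ℝ (Fin d))⟫| ≤ ε} ⊆
      {q | ⟪v₁, (q : EuclideanSpace ℝ (Fin d))⟫ ∈
        Icc ((-⟪v₁, b⟫ - ε) / σ) ((-⟪v₁, b⟫ + ε) / σ)} := by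
    intro q hq
    rw [mem_ofPred_eq, inner_add_right, real_inner_smul_right, abs_le] at hq
    exact ⟨(div_le_iff₀ hσ).2 (by linarith), (le_div_iff₀ hσ).2 (by linarith)⟩
  calc uniformSphere d _ ≤ uniformSphere d _ := measure_mono hband
    _ ≤ ENNReal.ofReal (((-⟪v₁, b⟫ + ε) / σ - (-⟪v₁, b⟫ - ε) / σ) * √(d / (2 * π))) :=
      uniformSphere_inner_mem_Icc_le hd hv₁ _ _
    _ = ENNReal.ofReal δ := by
      have hd0 : (0 : ℝ) < d := by positivity
      congr 1
      simp only [ε]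
      rw [sqrt_div' _ (by positivity), sqrt_mul' _ pi_pos.le, sqrt_mul' _ hd0.le]
      field_simp
      rw [sq_sqrt zero_le_two]
      ring

theorem stmt16 {d : ℕ} (hd : 2 < d)
    (b : EuclideanSpace ℝ (Fin d)) (σ : ℝ) (hσ : 0 < σ)
    (v₁ : EuclideanSpace ℝ (Fin d)) (hv₁ : ‖v₁‖ = 1)
    (δ : ℝ) (hδ0 : 0 < δ) (hδ1 : δ < 1) :
    uniformSphere d
      {q : Metric.sphere (0 : EuclideanSpace ℝ (Fin d)) 1 |
        |⟪v₁, b + σ • (q : EuclideanSpace ℝ (Fin d))⟫| ≤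
          Real.sqrt Real.pi * σ * δ / Real.sqrt (2 * d)} ≤
    ENNReal.ofReal δ :=
  stmt16_general hd b σ hσ v₁ hv₁ δ
end

section
/- Define R = β/(2ρ) + sqrt((β/(2ρ))² + ‖b‖/ρ) with β = ‖A‖_op. Then every x ∈ ℝᵈ with ‖x‖ > 2R satisfies f(x) ≥ (2ρ/3)R³ > 0 for f(x) = (1/2)xᵀAx + bᵀx + (ρ/3)‖x‖³. Consequently, any iterate sequence on which f is non-increasing and starts with f(x₀) ≤ 0 remains in the ball of radius 2R. -/
open scoped RealInnerProductSpace

theorem stmt19 {n : ℕ} (A : Matrix (Fin n) (Fin n) ℝ) (hA : A.IsSymm)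
    (b : EuclideanSpace ℝ (Fin n)) (hb : b ≠ 0) (ρ : ℝ) (hρ : 0 < ρ)
    (β : ℝ) (hβ : β = ‖Am A‖) (R : ℝ)
    (hR : R = β/(2*ρ) + Real.sqrt ((β/(2*ρ))^2 + ‖b‖/ρ)) :
    (∀ x : EuclideanSpace ℝ (Fin n), ‖x‖ > 2*R → cubicF A b ρ x ≥ (2*ρ/3) * R^3) ∧
    (2*ρ/3) * R^3 > 0 ∧
    (∀ x : ℕ → EuclideanSpace ℝ (Fin n),
      (∀ t, cubicF A b ρ (x (t+1)) ≤ cubicF A b ρ (x t)) →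
      cubicF A b ρ (x 0) ≤ 0 → ∀ t, ‖x t‖ ≤ 2*R) := by
  have hβ0 : 0 ≤ β := hβ ▸ norm_nonneg _
  have hbn : 0 < ‖b‖ := norm_pos_iff.mpr hb
  have hDpos : 0 < (β/(2*ρ))^2 + ‖b‖/ρ := by positivity
  have hs : Real.sqrt ((β/(2*ρ))^2 + ‖b‖/ρ) ^ 2 = (β/(2*ρ))^2 + ‖b‖/ρ :=
    Real.sq_sqrt hDpos.le
  have hβeq : β = 2*ρ*(β/(2*ρ)) := by field_simp
  have hRroot : ρ * R^2 - β * R - ‖b‖ = 0 := by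
    rw [hR]
    linear_combination ρ * hs + mul_div_cancel₀ ‖b‖ hρ.ne' -
      (β/(2*ρ) + Real.sqrt ((β/(2*ρ))^2 + ‖b‖/ρ)) * hβeq
  have hsqrtpos : 0 < Real.sqrt ((β/(2*ρ))^2 + ‖b‖/ρ) := Real.sqrt_pos.mpr hDpos
  have hRpos : 0 < R := by
    rw [hR]; positivity
  have hβρR : β ≤ ρ * R := by nlinarith [hRroot]
  -- main bound
  have hmain : ∀ x : EuclideanSpace ℝ (Fin n), ‖x‖ > 2*R →
      cubicF A b ρ x ≥ (2*ρ/3) * R^3 := by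
    intro x hx
    set r := ‖x‖ with hr
    have hr0 : 0 ≤ r := norm_nonneg x
    have h1 : -(β * r^2) ≤ ⟪x, Am A x⟫ := by
      have ha := abs_real_inner_le_norm x (Am A x)
      have hop := (Am A).le_opNorm x
      have := neg_abs_le (⟪x, Am A x⟫ : ℝ)
      rw [← hβ] at hop
      nlinarith [norm_nonneg (Am A x)]
    have h2 : -(‖b‖ * r) ≤ ⟪b, x⟫ := by
      have ha := abs_real_inner_le_norm b x
      have := neg_abs_le (⟪b, x⟫ : ℝ)
      linarith
    have hq : 0 ≤ 2*ρ*r^2 + (4*ρ*R - 3*β)*r + 2*ρ*R^2 := by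
      nlinarith [mul_nonneg (sub_nonneg.2 hβρR) hr0, mul_nonneg (mul_nonneg hρ.le hr0) hr0,
        mul_nonneg (mul_nonneg hρ.le hRpos.le) hr0, mul_nonneg (mul_nonneg hρ.le hRpos.le) hRpos.le]
    have h2R : 0 ≤ r - 2*R := by linarith
    have hpoly : (ρ/3)*r^3 - (β/2)*r^2 - ‖b‖*r ≥ (2*ρ/3) * R^3 := by
      nlinarith [mul_nonneg h2R hq, hRroot]
    have : cubicF A b ρ x ≥ (ρ/3)*r^3 - (β/2)*r^2 - ‖b‖*r := by
      unfold cubicF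
      rw [← hr]
      nlinarith [h1, h2]
    linarith
  have hpos : (2*ρ/3) * R^3 > 0 := by positivity
  refine ⟨hmain, hpos, ?_⟩
  intro x hdec h0 t
  have hle : cubicF A b ρ (x t) ≤ cubicF A b ρ (x 0) := by
    induction t with
    | zero => exact le_refl _
    | succ k ih => exact (hdec k).trans ih
  by_contra hgt
  push_neg at hgt
  have := hmain (x t) hgt
  linarith
end
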